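/- Let W be a d×d matrix with nonnegative entries. Then tr(exp(W)) ≥ d, with equality if and only if W is nilpotent (equivalently, W^d = 0). -/

import Mathlib

open Matrix

lemma pow_entry_nonneg {d : ℕ} (W : Matrix (Fin d) (Fin d) ℝ) (hW : ∀ i j, 0 ≤ W i j) :
    ∀ n i j, 0 ≤ (W ^ n) i j := by
  intro n
  induction n with
  | zero => intro i j; rw [pow_zero]; by_cases h : i = j <;> simp [Matrix.one_apply, h]
  | succ n ih =>
      intro i j
      rw [pow_succ, Matrix.mul_apply]
      exact Finset.sum_nonneg fun m _ => mul_nonneg (ih i m) (hW m j)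

lemma aux_nilpotent {d : ℕ} (W : Matrix (Fin d) (Fin d) ℝ) (hW : ∀ i j, 0 ≤ W i j)
    (hdiag : ∀ n, n ≠ 0 → ∀ i, (W ^ n) i i = 0) : W ^ d = 0 := by
  have hpow := pow_entry_nonneg W hW
  set R : Fin d → Fin d → Prop := fun i j => ∃ k, k ≠ 0 ∧ 0 < (W ^ k) i j with hR
  have htrans : ∀ i j l, R i j → R j l → R i l := by
    rintro i j l ⟨a, ha, hija⟩ ⟨b, hb, hjlb⟩
    refine ⟨a + b, by omega, ?_⟩
    rw [pow_add, Matrix.mul_apply]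
    calc (0:ℝ) < (W ^ a) i j * (W ^ b) j l := mul_pos hija hjlb
    _ ≤ _ := Finset.single_le_sum (fun m _ => mul_nonneg (hpow a i m) (hpow b m l))
        (Finset.mem_univ j)
  have hirr : ∀ i, ¬ R i i := by
    rintro i ⟨k, hk, hki⟩
    rw [hdiag k hk i] at hki
    exact lt_irrefl _ hki
  have chain : ∀ n i j, 0 < (W ^ n) i j →
      ∃ f : ℕ → Fin d, f 0 = i ∧ f n = j ∧ ∀ k < n, 0 < W (f k) (f (k+1)) := by
    intro n
    induction n with
    | zero =>
        intro i j hij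
        rw [pow_zero] at hij
        have hij' : i = j := by
          by_contra h
          rw [Matrix.one_apply_ne h] at hij
          exact lt_irrefl _ hij
        exact ⟨fun _ => i, rfl, hij' ▸ rfl, fun k hk => absurd hk (Nat.not_lt_zero k)⟩
    | succ n ih =>
        intro i j hij
        rw [pow_succ, Matrix.mul_apply] at hij
        obtain ⟨m, -, hm⟩ : ∃ m ∈ Finset.univ, 0 < (W ^ n) i m * W m j := by
          by_contra hcon
          push_neg at hcon
          have : ∑ m, (W ^ n) i m * W m j ≤ 0 := Finset.sum_nonpos fun m hmu => hcon m hmu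
          linarith
        have h1 : 0 < (W ^ n) i m := by
          rcases lt_or_eq_of_le (hpow n i m) with h | h
          · exact h
          · rw [← h, zero_mul] at hm; exact absurd hm (lt_irrefl 0)
        have h2 : 0 < W m j := by
          by_contra h
          push_neg at h
          have := mul_nonpos_of_nonneg_of_nonpos (hpow n i m) h
          linarith
        obtain ⟨f, hf0, hfn, hf⟩ := ih i m h1
        refine ⟨fun k => if k = n + 1 then j else f k, by simp [hf0], by simp, ?_⟩
        intro k hk
        rcases Nat.lt_succ_iff_lt_or_eq.mp hk with hk' | rfl
        · have hk1 : k ≠ n + 1 := by omega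
          have hk2 : k ≠ n := by omega
          simpa [hk1, hk2] using hf k hk'
        · simpa [Nat.succ_ne_self, hfn] using h2
  -- strict chain step: R between non-consecutive elements
  ext i j
  simp only [Matrix.zero_apply]
  by_contra hne
  have hij : 0 < (W ^ d) i j := lt_of_le_of_ne (hpow d i j) (Ne.symm hne)
  obtain ⟨f, -, -, hf⟩ := chain d i j hij
  have hstep : ∀ a b, a < b → b ≤ d → R (f a) (f b) := by
    intro a b hab hbd
    induction b with
    | zero => omega
    | succ b ihb =>
        rcases Nat.lt_succ_iff_lt_or_eq.mp hab with h | rfl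
        · exact htrans _ _ _ (ihb h (by omega)) ⟨1, one_ne_zero, by
            rw [pow_one]; exact hf b (by omega)⟩
        · exact ⟨1, one_ne_zero, by rw [pow_one]; exact hf a (by omega)⟩
  have hinj : Set.InjOn f (↑(Finset.range (d + 1))) := by
    intro a ha b hb hfab
    by_contra hne'
    rcases Nat.lt_or_ge a b with h | h
    · exact hirr (f b) (hfab ▸ hstep a b h (by simpa using Nat.lt_succ_iff.mp (by simpa using hb)))
    · have h' : b < a := by omega
      exact hirr (f a) (hfab ▸ hstep b a h' (by simpa using Nat.lt_succ_iff.mp (by simpa using ha)))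
  have hcard : ((Finset.range (d + 1)).image f).card = d + 1 := by
    rw [Finset.card_image_of_injOn hinj, Finset.card_range]
  have : ((Finset.range (d + 1)).image f).card ≤ d := by
    calc ((Finset.range (d + 1)).image f).card ≤ (Finset.univ : Finset (Fin d)).card :=
          Finset.card_le_card (Finset.subset_univ _)
      _ = d := by simp
  omega

/-- For a nonnegative `d × d` real matrix `W`, `tr (exp W) ≥ d`, with equality
iff `W` is nilpotent (equivalently `W ^ d = 0`). -/
theorem trace_exp_ge_card_and_eq_iff_nilpotent
    (d : ℕ) (W : Matrix (Fin d) (Fin d) ℝ) (hW : ∀ i j, 0 ≤ W i j) :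
    (d : ℝ) ≤ Matrix.trace (NormedSpace.exp W) ∧
      (Matrix.trace (NormedSpace.exp W) = d ↔ W ^ d = 0) := by
  letI : SeminormedRing (Matrix (Fin d) (Fin d) ℝ) := Matrix.linftyOpSemiNormedRing
  letI : NormedRing (Matrix (Fin d) (Fin d) ℝ) := Matrix.linftyOpNormedRing
  letI : NormedAlgebra ℝ (Matrix (Fin d) (Fin d) ℝ) := Matrix.linftyOpNormedAlgebra
  have hpow := pow_entry_nonneg W hW
  have hsum : Summable (fun n : ℕ => ((n.factorial : ℝ)⁻¹) • W ^ n) :=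
    NormedSpace.expSeries_summable' (𝕂 := ℝ) W
  set a : ℕ → ℝ := fun n => ((n.factorial : ℝ)⁻¹) * Matrix.trace (W ^ n) with ha
  let T : Matrix (Fin d) (Fin d) ℝ →ₗ[ℝ] ℝ := Matrix.traceLinearMap (Fin d) ℝ ℝ
  have hcont : Continuous T := LinearMap.continuous_of_finiteDimensional T
  have key : HasSum a (Matrix.trace (NormedSpace.exp W)) := by
    have h1 := hsum.hasSum.map T hcont
    have h2 : (⇑T ∘ fun n : ℕ => ((n.factorial : ℝ)⁻¹) • W ^ n) = a := by
      funext n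
      simp [Function.comp]
      simp [T, ha, Matrix.traceLinearMap_apply, smul_eq_mul]
    rw [h2] at h1
    have h3 : T (∑' n : ℕ, ((n.factorial : ℝ)⁻¹) • W ^ n) = Matrix.trace (NormedSpace.exp W) := by
      rw [NormedSpace.exp_eq_tsum (𝕂 := ℝ)]
      rfl
    rwa [h3] at h1
  have hnn : ∀ n, 0 ≤ a n := by
    intro n
    apply mul_nonneg (inv_nonneg.mpr (Nat.cast_nonneg _))
    exact Finset.sum_nonneg fun i _ => hpow n i i
  have ha0 : a 0 = d := by
    simp [ha, Matrix.trace_one]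
  constructor
  · calc (d : ℝ) = a 0 := ha0.symm
      _ ≤ Matrix.trace (NormedSpace.exp W) := by
          rw [← key.tsum_eq]
          exact Summable.le_tsum key.summable 0 fun n _ => hnn n
  · constructor
    · intro h
      apply aux_nilpotent W hW
      intro n hn i
      have han : a n = 0 := by
        have hle : a 0 + a n ≤ ∑' k, a k := by
          have := Summable.sum_le_tsum ({0, n} : Finset ℕ) (fun k _ => hnn k) key.summable
          rwa [Finset.sum_pair (Ne.symm hn)] at this
        rw [key.tsum_eq, h, ha0] at hle
        have := hnn n
        linarith
      have htrn : Matrix.trace (W ^ n) = 0 := by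
        have hfac : ((n.factorial : ℝ)⁻¹) ≠ 0 := by
          positivity
        rcases mul_eq_zero.mp han with h' | h'
        · exact absurd h' hfac
        · exact h'
      have := (Finset.sum_eq_zero_iff_of_nonneg fun k _ => hpow n k k).mp htrn
      exact this i (Finset.mem_univ i)
    · intro hWd
      have hnil : ∀ n, n ≠ 0 → Matrix.trace (W ^ n) = 0 := by
        intro n hn
        have : IsNilpotent (W ^ n) := ⟨d, by
          rw [← pow_mul, mul_comm, pow_mul, hWd]
          exact zero_pow hn⟩
        exact (Matrix.isNilpotent_trace_of_isNilpotent this).eq_zero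
      have : ∑' n, a n = a 0 := by
        apply tsum_eq_single
        intro b hb
        simp [ha, hnil b hb]
      rw [← key.tsum_eq, this, ha0]
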